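/- Let σ be an element of a right-angled Artin group G(Γ) with minimal syllable number among its conjugates, and suppose its minimal word is w = w_1 x_1^{e_1} x_k^{e_k} w_2 where every syllable of w_1 commutes with x_1 and every syllable of w_2 commutes with x_k. If additionally x_1 and x_k commute with each other and x_1 ≠ x_k as generators, then the first and last syllables of σ are incomparable in the syllable partial order, and (under a homomorphism φ realizing commuting generators on disjoint supports) the assigned subsurfaces X^σ(x_1^{e_1}) and X^σ(x_k^{e_k}) are disjoint, hence distinct. -/

import Mathlib

/-- The commutator relators of a right-angled Artin group on the graph `Γ`. -/
def raagRel {V : Type*} (Γ : SimpleGraph V) : Set (FreeGroup V) :=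
  {r | ∃ u v : V, Γ.Adj u v ∧
    r = FreeGroup.of u * FreeGroup.of v * (FreeGroup.of u)⁻¹ * (FreeGroup.of v)⁻¹}

/-- The right-angled Artin group on the graph `Γ`. -/
abbrev RAAG {V : Type*} (Γ : SimpleGraph V) := PresentedGroup (raagRel Γ)

/-- The generator of `RAAG Γ` corresponding to the vertex `v`. -/
def raagGen {V : Type*} (Γ : SimpleGraph V) (v : V) : RAAG Γ :=
  PresentedGroup.of (rels := raagRel Γ) v

/-- The element of `RAAG Γ` represented by a word in syllable form
`x₁^{e₁} ⋯ x_k^{e_k}`, encoded as a list of (generator, exponent) pairs. -/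
def wordProd {V : Type*} (Γ : SimpleGraph V) (w : List (V × ℤ)) : RAAG Γ :=
  (w.map fun p => (raagGen Γ p.1) ^ p.2).prod

/-- `w` is a word for `σ` with the minimal number of syllables (`w ∈ Min(σ)`). -/
def IsMinWord {V : Type*} (Γ : SimpleGraph V) (σ : RAAG Γ) (w : List (V × ℤ)) : Prop :=
  wordProd Γ w = σ ∧ ∀ w' : List (V × ℤ), wordProd Γ w' = σ → w.length ≤ w'.length

/-- The number of syllables of `σ`: the least number of syllables of a word representing it. -/
noncomputable def sylCount {V : Type*} (Γ : SimpleGraph V) (σ : RAAG Γ) : ℕ :=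
  sInf {k | ∃ w : List (V × ℤ), wordProd Γ w = σ ∧ w.length = k}

/-- Number of earlier occurrences of the syllable at position `i` in `w`. -/
def occCount {V : Type*} [DecidableEq V] [Inhabited V] (w : List (V × ℤ)) (i : ℕ) : ℕ :=
  (w.take i).count (w.getD i default)

/-- Position `i'` of `w'` carries the same syllable (same generator, exponent and
occurrence number) as position `i` of `w`. -/
def sylMatch {V : Type*} [DecidableEq V] [Inhabited V]
    (w w' : List (V × ℤ)) (i i' : ℕ) : Prop :=
  i < w.length ∧ i' < w'.length ∧ w'.getD i' default = w.getD i default ∧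
    occCount w' i' = occCount w i

/-- The syllable partial order on `syl(σ)`: the syllable at position `i` of the minimal
word `w` precedes the one at position `j` in *every* minimal word for `σ`. -/
def sylPrec {V : Type*} [DecidableEq V] [Inhabited V] (Γ : SimpleGraph V) (σ : RAAG Γ)
    (w : List (V × ℤ)) (i j : ℕ) : Prop :=
  ∀ w' : List (V × ℤ), IsMinWord Γ σ w' →
    ∀ i' j' : ℕ, sylMatch w w' i i' → sylMatch w w' j j' → i' < j'

/-- The subsurface assigned to the `m`-th syllable of the word `w`:
`X^w(x_m^{e_m}) = φ(x₁^{e₁}⋯x_{m-1}^{e_{m-1}})(X_{J(m)})`. -/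
def sylSubsurface {V S : Type*} [Inhabited V] (Γ : SimpleGraph V)
    (φ : RAAG Γ →* Equiv.Perm S) (X : V → Set S) (w : List (V × ℤ)) (m : ℕ) : Set S :=
  (φ (wordProd Γ (w.take m))) '' X (w.getD m default).1

/-!
Since `a.1` and `b.1` commute, swapping the two middle syllables gives another minimal word for
`σ` in which they occur in the opposite order, so neither precedes the other. Both subsurfaces are
images under `φ (wordProd Γ w₁)`: the first of `X a.1`, the second of `X b.1` moved by the power
`φ (raagGen Γ a.1 ^ a.2)`, which fixes `X b.1` pointwise since `X b.1` misses its support `X a.1`.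
-/

section RAAG

variable {V : Type*} (Γ : SimpleGraph V)

theorem raagGen_commute {u v : V} (h : Γ.Adj u v) : Commute (raagGen Γ u) (raagGen Γ v) := by
  rw [← commutatorElement_eq_one_iff_commute]
  exact PresentedGroup.one_of_mem ⟨u, v, h, rfl⟩

theorem wordProd_append (u v : List (V × ℤ)) :
    wordProd Γ (u ++ v) = wordProd Γ u * wordProd Γ v := by
  simp [wordProd]

theorem wordProd_singleton (a : V × ℤ) : wordProd Γ [a] = raagGen Γ a.1 ^ a.2 := by
  simp [wordProd]

theorem wordProd_swap {a b : V × ℤ} (hab : Γ.Adj a.1 b.1) (u v : List (V × ℤ)) :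
    wordProd Γ (u ++ b :: a :: v) = wordProd Γ (u ++ a :: b :: v) := by
  simp only [wordProd, List.map_append, List.prod_append, List.map_cons, List.prod_cons,
    ← mul_assoc, ((raagGen_commute Γ hab).zpow_zpow a.2 b.2).eq]

theorem IsMinWord.swap {σ : RAAG Γ} {a b : V × ℤ} {u v : List (V × ℤ)}
    (h : IsMinWord Γ σ (u ++ a :: b :: v)) (hab : Γ.Adj a.1 b.1) :
    IsMinWord Γ σ (u ++ b :: a :: v) :=
  ⟨(wordProd_swap Γ hab u v).trans h.1, fun w hw => by simpa using h.2 w hw⟩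

theorem image_raagGen_zpow_eq_self {S : Type*} (φ : RAAG Γ →* Equiv.Perm S) (X : V → Set S)
    (hsupp : ∀ (v : V) (s : S), s ∉ X v → φ (raagGen Γ v) s = s)
    {v : V} {Y : Set S} (hY : Disjoint (X v) Y) (e : ℤ) : φ (raagGen Γ v ^ e) '' Y = Y :=
  Set.EqOn.image_eq_self fun s hs => by
    rw [map_zpow]
    exact Equiv.Perm.zpow_apply_eq_self_of_apply_eq_self (hsupp v s (hY.notMem_of_mem_right hs)) e

end RAAG

section Syllables

variable {V : Type*} [DecidableEq V] [Inhabited V]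

theorem sylMatch_self {w : List (V × ℤ)} {i : ℕ} (hi : i < w.length) : sylMatch w w i i :=
  ⟨hi, hi, rfl, rfl⟩

theorem sylMatch_swap_left {a b : V × ℤ} (hab : a ≠ b) (u v : List (V × ℤ)) :
    sylMatch (u ++ a :: b :: v) (u ++ b :: a :: v) u.length (u.length + 1) := by
  refine ⟨by simp, by simp, by simp [List.getD_eq_getElem?_getD], ?_⟩
  simp [occCount, List.getD_eq_getElem?_getD, List.take_append, hab.symm,
    List.take_of_length_le (Nat.le_succ _)]

theorem sylMatch_swap_right {a b : V × ℤ} (hab : a ≠ b) (u v : List (V × ℤ)) :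
    sylMatch (u ++ a :: b :: v) (u ++ b :: a :: v) (u.length + 1) u.length := by
  refine ⟨by simp, by simp, by simp [List.getD_eq_getElem?_getD], ?_⟩
  simp [occCount, List.getD_eq_getElem?_getD, List.take_append, hab,
    List.take_of_length_le (Nat.le_succ _)]

theorem sylPrec.lt_of_isMinWord {Γ : SimpleGraph V} {σ : RAAG Γ} {w : List (V × ℤ)}
    {i j : ℕ} (h : sylPrec Γ σ w i j) (hw : IsMinWord Γ σ w) (hi : i < w.length)
    (hj : j < w.length) :
    i < j :=
  h w hw i j (sylMatch_self hi) (sylMatch_self hj)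

end Syllables

section Subsurfaces

variable {V S : Type*} [Inhabited V] (Γ : SimpleGraph V) (φ : RAAG Γ →* Equiv.Perm S)
  (X : V → Set S)

theorem sylSubsurface_append_cons (u v : List (V × ℤ)) (c : V × ℤ) :
    sylSubsurface Γ φ X (u ++ c :: v) u.length = φ (wordProd Γ u) '' X c.1 := by
  simp [sylSubsurface, List.getD_eq_getElem?_getD]

theorem sylSubsurface_succ_append_cons_cons
    (hsupp : ∀ (v : V) (s : S), s ∉ X v → φ (raagGen Γ v) s = s)
    (u v : List (V × ℤ)) {a b : V × ℤ} (hab : Disjoint (X a.1) (X b.1)) :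
    sylSubsurface Γ φ X (u ++ a :: b :: v) (u.length + 1) = φ (wordProd Γ u) '' X b.1 := by
  have hsplit : u ++ a :: b :: v = (u ++ [a]) ++ b :: v := by simp
  have hlen : u.length + 1 = (u ++ [a]).length := by simp
  rw [hsplit, hlen, sylSubsurface_append_cons, wordProd_append, wordProd_singleton, map_mul,
    Equiv.Perm.coe_mul, Set.image_comp, image_raagGen_zpow_eq_self Γ φ X hsupp hab]

end Subsurfaces

theorem incomparable_syllables_disjoint_subsurfaces_general {V S : Type*} [DecidableEq V] [Inhabited V]
    (Γ : SimpleGraph V) (φ : RAAG Γ →* Equiv.Perm S) (X : V → Set S)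
    (hsupp : ∀ (v : V) (s : S), s ∉ X v → φ (raagGen Γ v) s = s)
    (hdisj : ∀ u v : V, Γ.Adj u v → X u ∩ X v = ∅)
    (σ : RAAG Γ) (w₁ w₂ : List (V × ℤ)) (a b : V × ℤ)
    (hmin : IsMinWord Γ σ (w₁ ++ a :: b :: w₂))
    (hab : Γ.Adj a.1 b.1) :
    ¬ sylPrec Γ σ (w₁ ++ a :: b :: w₂) w₁.length (w₁.length + 1) ∧
    ¬ sylPrec Γ σ (w₁ ++ a :: b :: w₂) (w₁.length + 1) w₁.length ∧
    sylSubsurface Γ φ X (w₁ ++ a :: b :: w₂) w₁.length ∩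
      sylSubsurface Γ φ X (w₁ ++ a :: b :: w₂) (w₁.length + 1) = ∅ ∧
    ((∀ v : V, (X v).Nonempty) →
      sylSubsurface Γ φ X (w₁ ++ a :: b :: w₂) w₁.length ≠
        sylSubsurface Γ φ X (w₁ ++ a :: b :: w₂) (w₁.length + 1)) := by
  have hXab : Disjoint (X a.1) (X b.1) := Set.disjoint_iff_inter_eq_empty.2 (hdisj a.1 b.1 hab)
  have hsyl_ne : a ≠ b := fun h => Γ.ne_of_adj hab (congrArg Prod.fst h)
  have hdisjoint : sylSubsurface Γ φ X (w₁ ++ a :: b :: w₂) w₁.length ∩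
      sylSubsurface Γ φ X (w₁ ++ a :: b :: w₂) (w₁.length + 1) = ∅ := by
    rw [sylSubsurface_append_cons, sylSubsurface_succ_append_cons_cons Γ φ X hsupp w₁ w₂ hXab,
      ← Set.image_inter (Equiv.injective _), hdisj a.1 b.1 hab, Set.image_empty]
  refine ⟨fun hp => ?_, fun hp => ?_, hdisjoint, fun hX heq => ?_⟩
  · have := hp _ (hmin.swap Γ hab) _ _ (sylMatch_swap_left hsyl_ne w₁ w₂)
      (sylMatch_swap_right hsyl_ne w₁ w₂)
    omega
  · have := hp.lt_of_isMinWord hmin (by simp) (by simp)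
    omega
  · rw [heq, Set.inter_self, sylSubsurface_succ_append_cons_cons Γ φ X hsupp w₁ w₂ hXab]
      at hdisjoint
    exact ((hX b.1).image _).ne_empty hdisjoint

/-- If `σ` (minimal syllable count among its conjugates) has minimal word
`w₁ x₁^{e₁} x_k^{e_k} w₂` with every syllable of `w₁` commuting with `x₁`, every syllable
of `w₂` commuting with `x_k`, and `x₁, x_k` distinct commuting generators, then the two
middle syllables are incomparable in the syllable partial order and their assigned
subsurfaces are disjoint, hence distinct (when supports are nonempty). -/
theorem incomparable_syllables_disjoint_subsurfaces {V S : Type*} [DecidableEq V] [Inhabited V]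
    (Γ : SimpleGraph V) (φ : RAAG Γ →* Equiv.Perm S) (X : V → Set S)
    (hsupp : ∀ (v : V) (s : S), s ∉ X v → φ (raagGen Γ v) s = s)
    (hdisj : ∀ u v : V, Γ.Adj u v → X u ∩ X v = ∅)
    (σ : RAAG Γ) (w₁ w₂ : List (V × ℤ)) (a b : V × ℤ)
    (hmin : IsMinWord Γ σ (w₁ ++ a :: b :: w₂))
    (hconj : ∀ g : RAAG Γ, sylCount Γ σ ≤ sylCount Γ (g * σ * g⁻¹))
    (hw₁ : ∀ p ∈ w₁, Prod.fst p = a.1 ∨ Γ.Adj (Prod.fst p) a.1)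
    (hw₂ : ∀ p ∈ w₂, Prod.fst p = b.1 ∨ Γ.Adj (Prod.fst p) b.1)
    (hab : Γ.Adj a.1 b.1) (hne : a.1 ≠ b.1) :
    ¬ sylPrec Γ σ (w₁ ++ a :: b :: w₂) w₁.length (w₁.length + 1) ∧
    ¬ sylPrec Γ σ (w₁ ++ a :: b :: w₂) (w₁.length + 1) w₁.length ∧
    sylSubsurface Γ φ X (w₁ ++ a :: b :: w₂) w₁.length ∩
      sylSubsurface Γ φ X (w₁ ++ a :: b :: w₂) (w₁.length + 1) = ∅ ∧
    ((∀ v : V, (X v).Nonempty) →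
      sylSubsurface Γ φ X (w₁ ++ a :: b :: w₂) w₁.length ≠
        sylSubsurface Γ φ X (w₁ ++ a :: b :: w₂) (w₁.length + 1)) :=
  incomparable_syllables_disjoint_subsurfaces_general Γ φ X hsupp hdisj σ w₁ w₂ a b hmin hab
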